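/- Let v and v' be votings of the nation over a finite candidate set containing distinct candidates A and B, such that under v, candidate A receives strictly more votes than every other candidate in every one of the K regions. Suppose v' is obtained from v by changing some cells' votes from A to B (all other votes unchanged), with every changed cell lying in the union of B_blk pairwise disjoint m_n × m_n noise-concentrated blocks contained in the nation; set S_c = B_blk·m_n². If S_c < (m_n²/m_r²) · (1/(⌈m_n/m_r⌉ + 1)²) · (N/2), then under v' candidate A receives a strict plurality in strictly more than half of the K regions; in particular A wins strictly more regions than any other candidate, so regional voting still selects A. -/

import Mathlib

/-- The nation: the set of cells `{0,…,L−1} × {0,…,M−1} ⊆ ℤ²`. -/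
noncomputable def nation (L M : ℤ) : Finset (ℤ × ℤ) :=
  Finset.Ico 0 L ×ˢ Finset.Ico 0 M

/-- The region index of a cell `(x, y)` for the (unshifted) partition into `m × m` squares:
`(⌊x/m⌋, ⌊y/m⌋)`. -/
def regionIdx (m : ℤ) (p : ℤ × ℤ) : ℤ × ℤ :=
  (p.1.fdiv m, p.2.fdiv m)

/-- The `mn × mn` noise-concentrated block at position `(u, v)`. -/
noncomputable def noiseBlock (mn u v : ℤ) : Finset (ℤ × ℤ) :=
  Finset.Ico u (u + mn) ×ˢ Finset.Ico v (v + mn)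

/-- The number of votes that candidate `c` receives in the region with index `r` under
voting `v`. -/
noncomputable def votesIn {C : Type} [DecidableEq C] (L M mr : ℤ) (v : ℤ × ℤ → C) (r : ℤ × ℤ) (c : C) : ℕ :=
  ((nation L M).filter (fun p => regionIdx mr p = r ∧ v p = c)).card

/-!
Only a region containing a changed cell can lose A's strict plurality, since elsewhere the vote
counts are unchanged. An `m_n × m_n` block meets at most `⌈m_n/m_r⌉ + 1` columns and as many
rows of regions, so the changes touch at most `B_blk (⌈m_n/m_r⌉ + 1)²` regions; after dividing
by `m_n²`, the noise bound says exactly that this is fewer than half of the `K = N/m_r²` regions.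
-/

open Finset

namespace Int

theorem image_ediv_Ico_zero_mul {d : ℤ} (hd : 0 < d) (k : ℤ) :
    (Ico 0 (d * k)).image (· / d) = Ico 0 k := by
  ext z
  simp only [mem_image, mem_Ico]
  constructor
  · rintro ⟨x, ⟨hx0, hxk⟩, rfl⟩
    exact ⟨Int.ediv_nonneg hx0 hd.le, (Int.ediv_lt_iff_lt_mul hd).2 (by linarith)⟩
  · rintro ⟨hz0, hzk⟩
    exact ⟨z * d, ⟨by positivity, by nlinarith⟩, Int.mul_ediv_cancel _ hd.ne'⟩

theorem card_image_ediv_Ico_le {d k : ℤ} {n : ℕ} (hd : 0 < d) (hk : k ≤ n * d) (u : ℤ) :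
    ((Ico u (u + k)).image (· / d)).card ≤ n + 1 := by
  have hsub : (Ico u (u + k)).image (· / d) ⊆ Ico (u / d) (u / d + (n + 1)) := by
    intro z hz
    simp only [mem_image, mem_Ico] at hz ⊢
    obtain ⟨x, ⟨hux, hxk⟩, rfl⟩ := hz
    refine ⟨Int.ediv_le_ediv hd hux, (Int.ediv_lt_iff_lt_mul hd).2 ?_⟩
    have := Int.lt_ediv_add_one_mul_self u hd
    nlinarith
  calc _ ≤ (Ico (u / d) (u / d + (n + 1))).card := card_le_card hsub
    _ = n + 1 := by simp

end Int

theorem regionIdx_eq_prodMap {m : ℤ} (hm : 0 ≤ m) :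
    regionIdx m = Prod.map (· / m) (· / m) := by
  funext p
  simp [regionIdx, Prod.map, Int.fdiv_eq_ediv_of_nonneg _ hm]

theorem image_regionIdx_nation {m : ℤ} (hm : 0 < m) (a b : ℤ) :
    (nation (m * a) (m * b)).image (regionIdx m) = nation a b := by
  rw [regionIdx_eq_prodMap hm.le, nation, prodMap_image_product,
    Int.image_ediv_Ico_zero_mul hm, Int.image_ediv_Ico_zero_mul hm, nation]

theorem card_nation {L M : ℤ} (hL : 0 ≤ L) (hM : 0 ≤ M) :
    ((nation L M).card : ℤ) = L * M := by
  simp [nation, hL, hM]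

theorem card_image_regionIdx_noiseBlock_le {m k : ℤ} {n : ℕ} (hm : 0 < m) (hk : k ≤ n * m)
    (u w : ℤ) : ((noiseBlock k u w).image (regionIdx m)).card ≤ (n + 1) ^ 2 := by
  rw [regionIdx_eq_prodMap hm.le, noiseBlock, prodMap_image_product, card_product, sq]
  exact Nat.mul_le_mul (Int.card_image_ediv_Ico_le hm hk u) (Int.card_image_ediv_Ico_le hm hk w)

theorem card_filter_add_card_filter_le_of_strict_winners {ι C : Type*} [Fintype C]
    [DecidableEq C] (s : Finset ι) (score : ι → C → ℕ) {a b : C} (hab : a ≠ b) :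
    (s.filter fun r => ∀ c, c ≠ a → score r c < score r a).card +
      (s.filter fun r => ∀ c, c ≠ b → score r c < score r b).card ≤ s.card := by
  classical
  have hdisj : Disjoint (s.filter fun r => ∀ c, c ≠ a → score r c < score r a)
      (s.filter fun r => ∀ c, c ≠ b → score r c < score r b) :=
    disjoint_filter.2 fun r _ ha hb => (ha b hab.symm).asymm (hb a hab)
  rw [← card_union_of_disjoint hdisj]
  exact card_le_card (union_subset (filter_subset _ _) (filter_subset _ _))

theorem two_mul_mul_sq_lt_of_lt_noise_bound {K : Type*} [Field K] [LinearOrder K]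
    [IsStrictOrderedRing K] {s m n t a b : K} (hm : 0 < m) (hn : 0 < n) (ht : 0 < t)
    (h : s * n ^ 2 < n ^ 2 / m ^ 2 * (1 / t ^ 2) * (m * a * (m * b) / 2)) :
    2 * s * t ^ 2 < a * b := by
  have hrhs : n ^ 2 / m ^ 2 * (1 / t ^ 2) * (m * a * (m * b) / 2) =
      a * b / (2 * t ^ 2) * n ^ 2 := by
    field_simp
  rw [hrhs, mul_lt_mul_iff_of_pos_right (by positivity), lt_div_iff₀ (by positivity)] at h
  linarith

section Voting

variable {C : Type} [DecidableEq C] {L M m : ℤ} {v v' : ℤ × ℤ → C}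

variable (L M m v v') in
noncomputable def changedRegions : Finset (ℤ × ℤ) :=
  ((nation L M).filter fun p => v' p ≠ v p).image (regionIdx m)

theorem votesIn_eq_of_notMem_changedRegions {r : ℤ × ℤ}
    (hr : r ∉ changedRegions L M m v v') : votesIn L M m v' r = votesIn L M m v r := by
  funext c
  unfold votesIn
  congr 1
  refine filter_congr fun p hp => ?_
  by_cases hpr : regionIdx m p = r
  · have hvp : v' p = v p := by
      by_contra hne
      exact hr (hpr ▸ mem_image_of_mem _ (mem_filter.2 ⟨hp, hne⟩))
    rw [hvp]
  · simp [hpr]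

theorem card_le_card_filter_add_card_changedRegions [Fintype C] {s : Finset (ℤ × ℤ)}
    {a : C}
    (hwins : ∀ r ∈ s, ∀ c, c ≠ a → votesIn L M m v r c < votesIn L M m v r a) :
    s.card ≤
      (s.filter fun r => ∀ c, c ≠ a → votesIn L M m v' r c < votesIn L M m v' r a).card +
        (changedRegions L M m v v').card := by
  refine (card_le_card fun r hr => ?_).trans (card_union_le _ _)
  by_cases hrc : r ∈ changedRegions L M m v v'
  · exact mem_union_right _ hrc
  · refine mem_union_left _ (mem_filter.2 ⟨hr, ?_⟩)
    rw [votesIn_eq_of_notMem_changedRegions hrc]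
    exact hwins r hr

theorem card_changedRegions_le {ι : Type*} [Fintype ι] {k : ℤ} {n : ℕ} (hm : 0 < m)
    (hk : k ≤ n * m) (pos : ι → ℤ × ℤ)
    (hdiff : ∀ p, v' p ≠ v p → p ∈ univ.biUnion fun i => noiseBlock k (pos i).1 (pos i).2) :
    (changedRegions L M m v v').card ≤ Fintype.card ι * (n + 1) ^ 2 := by
  have hsub : changedRegions L M m v v' ⊆
      univ.biUnion fun i => (noiseBlock k (pos i).1 (pos i).2).image (regionIdx m) := by
    intro r hr
    obtain ⟨p, hp, rfl⟩ := mem_image.1 hr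
    obtain ⟨i, -, hpi⟩ := mem_biUnion.1 (hdiff p (mem_filter.1 hp).2)
    exact mem_biUnion.2 ⟨i, mem_univ i, mem_image_of_mem _ hpi⟩
  calc _ ≤ _ := card_le_card hsub
    _ ≤ ∑ i, ((noiseBlock k (pos i).1 (pos i).2).image (regionIdx m)).card := card_biUnion_le
    _ ≤ ∑ _i : ι, (n + 1) ^ 2 :=
      sum_le_sum fun i _ => card_image_regionIdx_noiseBlock_le hm hk _ _
    _ = _ := by simp

end Voting

theorem regional_voting_retains_A_multicandidate_general {C : Type} [Fintype C] [DecidableEq C]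
    (A : C) (L M mr mn : ℤ)
    (hL : 0 < L) (hM : 0 < M) (hmr : 1 ≤ mr) (hmn : 1 ≤ mn)
    (hdL : mr ∣ L) (hdM : mr ∣ M)
    (v v' : ℤ × ℤ → C)
    (hAwins : ∀ r ∈ (nation L M).image (regionIdx mr),
      ∀ c : C, c ≠ A → votesIn L M mr v r c < votesIn L M mr v r A)
    (Bblk : ℕ) (pos : Fin Bblk → ℤ × ℤ)
    (hdiff : ∀ p, v' p ≠ v p →
      p ∈ Finset.univ.biUnion (fun i : Fin Bblk => noiseBlock mn (pos i).1 (pos i).2))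
    (Sc : ℤ) (hSc : Sc = (Bblk : ℤ) * mn ^ 2)
    (hnoise : (Sc : ℚ) < ((mn : ℚ) ^ 2 / (mr : ℚ) ^ 2) *
      (1 / ((⌈(mn : ℚ) / (mr : ℚ)⌉ : ℚ) + 1) ^ 2) * (((L : ℚ) * (M : ℚ)) / 2)) :
    (((nation L M).image (regionIdx mr)).card <
      2 * (((nation L M).image (regionIdx mr)).filter
        (fun r => ∀ c : C, c ≠ A → votesIn L M mr v' r c < votesIn L M mr v' r A)).card) ∧
    (∀ c : C, c ≠ A →
      (((nation L M).image (regionIdx mr)).filter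
        (fun r => ∀ c' : C, c' ≠ c → votesIn L M mr v' r c' < votesIn L M mr v' r c)).card <
      (((nation L M).image (regionIdx mr)).filter
        (fun r => ∀ c' : C, c' ≠ A → votesIn L M mr v' r c' < votesIn L M mr v' r A)).card) := by
  have hmr0 : 0 < mr := by omega
  obtain ⟨a, rfl⟩ := hdL
  obtain ⟨b, rfl⟩ := hdM
  set K := (nation (mr * a) (mr * b)).image (regionIdx mr) with hK
  set q := ⌈(mn : ℚ) / mr⌉
  have hq : 0 ≤ q := Int.ceil_nonneg (by positivity)
  have hmnq : mn ≤ q.toNat * mr := by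
    have hmn_le : (mn : ℚ) ≤ q * mr := (div_le_iff₀ (by positivity)).1 (Int.le_ceil _)
    rw [Int.toNat_of_nonneg hq]
    exact_mod_cast hmn_le
  have hKcard : (K.card : ℤ) = a * b := by
    rw [hK, image_regionIdx_nation hmr0, card_nation (pos_of_mul_pos_right hL hmr0.le).le
      (pos_of_mul_pos_right hM hmr0.le).le]
  have hfew : 2 * (Bblk * (q.toNat + 1) ^ 2) < K.card := by
    have hQ : 2 * (Bblk : ℚ) * (q + 1) ^ 2 < a * b :=
      two_mul_mul_sq_lt_of_lt_noise_bound (m := (mr : ℚ)) (n := (mn : ℚ))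
        (by positivity) (by positivity) (by positivity)
        (by subst hSc; push_cast at hnoise; exact hnoise)
    zify
    rw [hKcard, Int.toNat_of_nonneg hq, ← mul_assoc]
    exact_mod_cast hQ
  have hchanged : (changedRegions (mr * a) (mr * b) mr v v').card ≤ Bblk * (q.toNat + 1) ^ 2 := by
    simpa using card_changedRegions_le hmr0 hmnq pos hdiff
  have hwins := card_le_card_filter_add_card_changedRegions (v' := v') hAwins
  refine ⟨by omega, fun c hc => ?_⟩
  have := card_filter_add_card_filter_le_of_strict_winners K (votesIn (mr * a) (mr * b) mr v') hc
  omega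

/-- Theorem 3, item 2: with finitely many candidates, if A has a strict plurality in every
region under `v`, and `v'` is obtained from `v` by changing some votes from A to B, all the
changed cells lying in a union of pairwise disjoint `m_n × m_n` blocks of total size
`S_c < (m_n²/m_r²) · (1/(⌈m_n/m_r⌉+1)²) · N/2`, then under `v'` candidate A has a strict
plurality in strictly more than half of the `K` regions; in particular A wins strictly more
regions than any other candidate. -/
theorem regional_voting_retains_A_multicandidate {C : Type} [Fintype C] [DecidableEq C]
    (A B : C) (hAB : A ≠ B) (L M mr mn : ℤ)
    (hL : 0 < L) (hM : 0 < M) (hmr : 1 ≤ mr) (hmn : 1 ≤ mn)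
    (hdL : mr ∣ L) (hdM : mr ∣ M)
    (v v' : ℤ × ℤ → C)
    (hAwins : ∀ r ∈ (nation L M).image (regionIdx mr),
      ∀ c : C, c ≠ A → votesIn L M mr v r c < votesIn L M mr v r A)
    (hAtoB : ∀ p, v' p = v p ∨ (v p = A ∧ v' p = B))
    (Bblk : ℕ) (pos : Fin Bblk → ℤ × ℤ)
    (hdisj : ∀ i j : Fin Bblk, i ≠ j →
      Disjoint (noiseBlock mn (pos i).1 (pos i).2) (noiseBlock mn (pos j).1 (pos j).2))
    (hsub : ∀ i : Fin Bblk, noiseBlock mn (pos i).1 (pos i).2 ⊆ nation L M)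
    (hdiff : ∀ p, v' p ≠ v p →
      p ∈ Finset.univ.biUnion (fun i : Fin Bblk => noiseBlock mn (pos i).1 (pos i).2))
    (Sc : ℤ) (hSc : Sc = (Bblk : ℤ) * mn ^ 2)
    (hnoise : (Sc : ℚ) < ((mn : ℚ) ^ 2 / (mr : ℚ) ^ 2) *
      (1 / ((⌈(mn : ℚ) / (mr : ℚ)⌉ : ℚ) + 1) ^ 2) * (((L : ℚ) * (M : ℚ)) / 2)) :
    (((nation L M).image (regionIdx mr)).card <
      2 * (((nation L M).image (regionIdx mr)).filter
        (fun r => ∀ c : C, c ≠ A → votesIn L M mr v' r c < votesIn L M mr v' r A)).card) ∧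
    (∀ c : C, c ≠ A →
      (((nation L M).image (regionIdx mr)).filter
        (fun r => ∀ c' : C, c' ≠ c → votesIn L M mr v' r c' < votesIn L M mr v' r c)).card <
      (((nation L M).image (regionIdx mr)).filter
        (fun r => ∀ c' : C, c' ≠ A → votesIn L M mr v' r c' < votesIn L M mr v' r A)).card) :=
  regional_voting_retains_A_multicandidate_general A L M mr mn hL hM hmr hmn hdL hdM v v' hAwins
    Bblk pos hdiff Sc hSc hnoise
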